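/- arXiv:1208.2202 — 4 statements merged into one kernel-verified Lean document; each statement's English description precedes it below -/
import Mathlib

section
/- The images in A_Γ of the distinguished edges {e_x : x ∈ Γ₊} generate A_Γ as an F-algebra and are F-linearly independent in A_Γ. -/
/-- A finite ranked poset: a partial order with a unique minimal element `star`
and a rank function `rk` such that `rk star = 0`, covering relations increase the
rank by exactly one, and `rk` is strictly monotone (for a finite poset this is
equivalent to: all maximal chains in `[star, x]` have the same length `rk x`). -/
structure RankedPoset (Γ : Type) [PartialOrder Γ] where
  star : Γ
  rk : Γ → ℕ
  bot_le : ∀ x, star ≤ x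
  rk_star : rk star = 0
  rk_covBy : ∀ ⦃x y : Γ⦄, x ⋖ y → rk y = rk x + 1
  rk_strictMono : StrictMono rk

/-- A covering edge `x → y` of the poset `Γ`, recorded as the pair `(x, y)` with `y ⋖ x`. -/
abbrev RankedPoset.Edge (Γ : Type) [PartialOrder Γ] : Type := {p : Γ × Γ // p.2 ⋖ p.1}

variable {Γ : Type} [PartialOrder Γ] [DecidableEq Γ]

/-- The polynomial `(s - e₁)(s - e₂)⋯(s - eₙ)` attached to a list of edges, with
coefficients in the free algebra `T(W)` on the set of edges. -/
noncomputable def pathPoly (F : Type) [Field F] (l : List (RankedPoset.Edge Γ)) :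
    Polynomial (FreeAlgebra F (RankedPoset.Edge Γ)) :=
  (l.map fun e => Polynomial.X - Polynomial.C (FreeAlgebra.ι F e)).prod

/-- `eCoeff F l j` is `e(π, j)`: the coefficient of `s^(n-j)` in `(s-e₁)⋯(s-eₙ)`. -/
noncomputable def eCoeff (F : Type) [Field F] (l : List (RankedPoset.Edge Γ)) (j : ℕ) :
    FreeAlgebra F (RankedPoset.Edge Γ) :=
  (pathPoly F l).coeff (l.length - j)

/-- `IsPath b a l` : the list of covering edges `l` forms a path from `b` down to `a`. -/
def IsPath (b a : Γ) (l : List (RankedPoset.Edge Γ)) : Prop :=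
  l ≠ [] ∧ List.Chain' (fun e f => e.1.2 = f.1.1) l ∧
    (∀ e ∈ l.head?, e.1.1 = b) ∧ (∀ e ∈ l.getLast?, e.1.2 = a)

open Polynomial

lemma RankedPoset.eq_star_of_rk_eq_zero (R : RankedPoset Γ) {x : Γ} (h : R.rk x = 0) :
    x = R.star := by
  by_contra hx
  have h1 : R.star < x := lt_of_le_of_ne (R.bot_le x) (Ne.symm hx)
  have h2 := R.rk_strictMono h1
  rw [R.rk_star] at h2
  omega

lemma isPath_single (e : RankedPoset.Edge Γ) : IsPath e.1.1 e.1.2 [e] := by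
  refine ⟨List.cons_ne_nil _ _, List.isChain_singleton _, ?_, ?_⟩ <;>
    · intro g hg; simp at hg; subst hg; rfl

lemma isPath_cons {e : RankedPoset.Edge Γ} {a : Γ} {t : List (RankedPoset.Edge Γ)}
    (ht : IsPath e.1.2 a t) : IsPath e.1.1 a (e :: t) := by
  obtain ⟨hne, hch, hh, hl⟩ := ht
  obtain ⟨f, t', rfl⟩ := List.exists_cons_of_ne_nil hne
  refine ⟨List.cons_ne_nil _ _, ?_, ?_, ?_⟩
  · exact List.isChain_cons.2 ⟨fun y hy => (hh y hy).symm, hch⟩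
  · intro g hg; simp at hg; subst hg; rfl
  · intro g hg; rw [List.getLast?_cons_cons] at hg; exact hl g hg

lemma isPath_facts (R : RankedPoset Γ) (F : Type) [Field F] :
    ∀ (l : List (RankedPoset.Edge Γ)) (b a : Γ), IsPath b a l →
      R.rk b = R.rk a + l.length ∧
      (l.map fun e => (Pi.single e.1.1 1 - Pi.single e.1.2 1 : Γ → F)).sum
        = Pi.single b 1 - Pi.single a 1 := by
  intro l
  induction l with
  | nil => intro b a h; exact absurd rfl h.1
  | cons e t ih =>
    intro b a h
    obtain ⟨-, hch, hh, hl⟩ := h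
    have hb : e.1.1 = b := hh e rfl
    have hrk : R.rk e.1.1 = R.rk e.1.2 + 1 := R.rk_covBy e.2
    rcases eq_or_ne t [] with rfl | hne
    · have ha : e.1.2 = a := hl e rfl
      subst hb; subst ha
      exact ⟨by simpa using hrk, by simp⟩
    · have ht : IsPath e.1.2 a t := by
        refine ⟨hne, hch.tail, ?_, ?_⟩
        · obtain ⟨f, t', rfl⟩ := List.exists_cons_of_ne_nil hne
          intro g hg; simp at hg; subst hg
          exact ((List.isChain_cons.1 hch).1 _ rfl).symm
        · obtain ⟨f, t', rfl⟩ := List.exists_cons_of_ne_nil hne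
          intro g hg; exact hl g (by rw [List.getLast?_cons_cons]; exact hg)
      obtain ⟨h1, h2⟩ := ih e.1.2 a ht
      subst hb
      refine ⟨by simp only [List.length_cons]; omega, ?_⟩
      simp only [List.map_cons, List.sum_cons, h2]
      abel

lemma pathPoly_cons (F : Type) [Field F] (e : RankedPoset.Edge Γ)
    (t : List (RankedPoset.Edge Γ)) :
    pathPoly F (e :: t) = (X - C (FreeAlgebra.ι F e)) * pathPoly F t := by
  rw [pathPoly, List.map_cons, List.prod_cons]; rfl

lemma pathPoly_monic (F : Type) [Field F] (l : List (RankedPoset.Edge Γ)) :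
    (pathPoly F l).Monic := by
  induction l with
  | nil => simpa [pathPoly] using monic_one
  | cons e t ih =>
    rw [pathPoly_cons]
    exact (monic_X_sub_C _).mul ih

lemma pathPoly_natDegree (F : Type) [Field F] (l : List (RankedPoset.Edge Γ)) :
    (pathPoly F l).natDegree = l.length := by
  induction l with
  | nil => simp [pathPoly]
  | cons e t ih =>
    rw [pathPoly_cons,
      Monic.natDegree_mul (monic_X_sub_C _) (pathPoly_monic F t), natDegree_X_sub_C,
      ih, List.length_cons]
    omega

lemma pathPoly_mul_X_coeff (F : Type) [Field F] (l : List (RankedPoset.Edge Γ)) :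
    (pathPoly F l * X).coeff l.length = -(l.map fun e => FreeAlgebra.ι F e).sum := by
  induction l with
  | nil => simp [pathPoly]
  | cons e t ih =>
    have hstep : pathPoly F (e :: t) * X
        = X * (pathPoly F t * X) - C (FreeAlgebra.ι F e) * (pathPoly F t * X) := by
      rw [pathPoly_cons, sub_mul, sub_mul, mul_assoc, mul_assoc]
    rw [hstep, coeff_sub, List.length_cons, coeff_X_mul, ih, coeff_C_mul, coeff_mul_X]
    have hdeg : (pathPoly F t).coeff t.length = 1 := by
      have := (pathPoly_monic F t).coeff_natDegree
      rwa [pathPoly_natDegree] at this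
    rw [hdeg, mul_one, List.map_cons, List.sum_cons, neg_add]
    abel

lemma eCoeff_one (F : Type) [Field F] {l : List (RankedPoset.Edge Γ)} (hl : l ≠ []) :
    eCoeff F l 1 = -(l.map fun e => FreeAlgebra.ι F e).sum := by
  have hlen : l.length - 1 + 1 = l.length := by
    have := List.length_pos_iff.2 hl; omega
  rw [eCoeff, ← coeff_mul_X, hlen, pathPoly_mul_X_coeff]

lemma tsze_prod (F : Type) [Field F] {Λ : Type} :
    ∀ lv : List (Λ → F),
      ((lv.map fun m => (X : Polynomial (TrivSqZeroExt F (Λ → F))) - C (TrivSqZeroExt.inr m)).prod) * X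
        = X ^ (lv.length + 1) - C (TrivSqZeroExt.inr lv.sum) * X ^ lv.length := by
  intro lv
  induction lv with
  | nil =>
    simp only [List.map_nil, List.prod_nil, one_mul, List.length_nil, List.sum_nil,
      TrivSqZeroExt.inr_zero, map_zero, zero_mul, zero_add, pow_one]
    exact (sub_zero (X : Polynomial (TrivSqZeroExt F (Λ → F)))).symm
  | cons m t ih =>
    rw [List.map_cons, List.prod_cons, mul_assoc, ih]
    have h0 : (C (TrivSqZeroExt.inr m) : Polynomial (TrivSqZeroExt F (Λ → F)))
        * C (TrivSqZeroExt.inr t.sum) = 0 := by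
      rw [← C_mul, TrivSqZeroExt.inr_mul_inr]; simp
    have : ((X : Polynomial (TrivSqZeroExt F (Λ → F))) - C (TrivSqZeroExt.inr m))
          * (X ^ (t.length + 1) - C (TrivSqZeroExt.inr t.sum) * X ^ t.length)
        = X ^ (t.length + 2)
          - (C (TrivSqZeroExt.inr m) + C (TrivSqZeroExt.inr t.sum)) * X ^ (t.length + 1)
          + (C (TrivSqZeroExt.inr m) * C (TrivSqZeroExt.inr t.sum)) * X ^ t.length := by
      ring
    rw [this, h0, zero_mul, add_zero, List.length_cons, List.sum_cons,
      TrivSqZeroExt.inr_add, C_add]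

def chainList (R : RankedPoset Γ) (de : Γ → Γ)
    (hde : ∀ x, x ≠ R.star → de x ⋖ x) : ℕ → Γ → List (RankedPoset.Edge Γ)
  | 0, _ => []
  | n+1, x =>
    if h : x = R.star then [] else ⟨(x, de x), hde x h⟩ :: chainList R de hde n (de x)

lemma chainList_star (R : RankedPoset Γ) (de : Γ → Γ)
    (hde : ∀ x, x ≠ R.star → de x ⋖ x) (n : ℕ) : chainList R de hde n R.star = [] := by
  cases n <;> simp [chainList]

lemma chainList_isPath (R : RankedPoset Γ) (de : Γ → Γ)
    (hde : ∀ x, x ≠ R.star → de x ⋖ x) :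
    ∀ (n : ℕ) (x : Γ), R.rk x ≤ n → x ≠ R.star →
      IsPath x R.star (chainList R de hde n x) := by
  intro n
  induction n with
  | zero =>
    intro x hx hne
    exact absurd (R.eq_star_of_rk_eq_zero (Nat.le_zero.1 hx)) hne
  | succ n ih =>
    intro x hx hne
    rw [chainList, dif_neg hne]
    have hcov : de x ⋖ x := hde x hne
    have hrk : R.rk x = R.rk (de x) + 1 := R.rk_covBy hcov
    by_cases hy : de x = R.star
    · have hnil : chainList R de hde n (de x) = [] := by
        rw [hy]; exact chainList_star R de hde n
      rw [hnil]
      exact ⟨List.cons_ne_nil _ _, List.isChain_singleton _,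
        fun g hg => by simp at hg; subst hg; rfl,
        fun g hg => by simp at hg; subst hg; exact hy⟩
    · exact isPath_cons (ih (de x) (by omega) hy)

lemma chainList_mem (R : RankedPoset Γ) (de : Γ → Γ)
    (hde : ∀ x, x ≠ R.star → de x ⋖ x) :
    ∀ (n : ℕ) (x : Γ) (e : RankedPoset.Edge Γ), e ∈ chainList R de hde n x →
      ∃ (z : Γ) (hz : z ≠ R.star), e = ⟨(z, de z), hde z hz⟩ := by
  intro n
  induction n with
  | zero => intro x e he; simp [chainList] at he
  | succ n ih =>
    intro x e he
    rw [chainList] at he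
    by_cases h : x = R.star
    · rw [dif_pos h] at he; simp at he
    · rw [dif_neg h] at he
      rcases List.mem_cons.1 he with rfl | h2
      · exact ⟨x, h, rfl⟩
      · exact ih (de x) e h2

/-- The defining relations of the splitting algebra: `e(π,j) = e(π',j)` for any two
paths `π, π'` from `b` to `a` and any `0 ≤ j ≤ d(b,a)`. -/
inductive SplitRel (R : RankedPoset Γ) (F : Type) [Field F] :
    FreeAlgebra F (RankedPoset.Edge Γ) → FreeAlgebra F (RankedPoset.Edge Γ) → Prop
  | mk (a b : Γ) (hab : a < b) (l l' : List (RankedPoset.Edge Γ)) (j : ℕ)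
      (hl : IsPath b a l) (hl' : IsPath b a l') (hj : j ≤ R.rk b - R.rk a) :
      SplitRel R F (eCoeff F l j) (eCoeff F l' j)

/-- The splitting algebra `A_Γ = T(W)/I`. -/
abbrev SplittingAlgebra (R : RankedPoset Γ) (F : Type) [Field F] : Type :=
  RingQuot (SplitRel R F)

/-- The quotient map `T(W) → A_Γ`. -/
noncomputable abbrev splitMk (R : RankedPoset Γ) (F : Type) [Field F] :
    FreeAlgebra F (RankedPoset.Edge Γ) →ₐ[F] SplittingAlgebra R F :=
  RingQuot.mkAlgHom F (SplitRel R F)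


lemma splitMk_edge (R : RankedPoset Γ) (F : Type) [Field F] (de : Γ → Γ)
    (hde : ∀ x, x ≠ R.star → de x ⋖ x) (e : RankedPoset.Edge Γ) :
    splitMk R F (FreeAlgebra.ι F e)
      = ((chainList R de hde (R.rk e.1.1) e.1.1).map
          (fun g => splitMk R F (FreeAlgebra.ι F g))).sum
        - ((chainList R de hde (R.rk e.1.2) e.1.2).map
          (fun g => splitMk R F (FreeAlgebra.ι F g))).sum := by
  have hrk : R.rk e.1.1 = R.rk e.1.2 + 1 := R.rk_covBy e.2
  have hbne : e.1.1 ≠ R.star := by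
    intro h; rw [h, R.rk_star] at hrk; omega
  have hp₁ : IsPath e.1.1 R.star (e :: chainList R de hde (R.rk e.1.2) e.1.2) := by
    by_cases ha : e.1.2 = R.star
    · have hnil : chainList R de hde (R.rk e.1.2) e.1.2 = [] := by
        rw [ha]; exact chainList_star R de hde _
      rw [hnil]
      exact ⟨List.cons_ne_nil _ _, List.isChain_singleton _,
        fun g hg => by simp at hg; subst hg; rfl,
        fun g hg => by simp at hg; subst hg; exact ha⟩
    · exact isPath_cons (chainList_isPath R de hde _ e.1.2 le_rfl ha)
  have hp₂ : IsPath e.1.1 R.star (chainList R de hde (R.rk e.1.1) e.1.1) :=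
    chainList_isPath R de hde _ e.1.1 le_rfl hbne
  have hstar : R.star < e.1.1 := lt_of_le_of_ne (R.bot_le _) (Ne.symm hbne)
  have hrel : SplitRel R F (eCoeff F (e :: chainList R de hde (R.rk e.1.2) e.1.2) 1)
      (eCoeff F (chainList R de hde (R.rk e.1.1) e.1.1) 1) :=
    SplitRel.mk R.star e.1.1 hstar _ _ 1 hp₁ hp₂ (by rw [R.rk_star]; omega)
  have heq := RingQuot.mkAlgHom_rel F hrel
  rw [eCoeff_one F hp₁.1, eCoeff_one F hp₂.1] at heq
  have h1 : ∀ l : List (RankedPoset.Edge Γ),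
      RingQuot.mkAlgHom F (SplitRel R F) ((l.map fun g => FreeAlgebra.ι F g).sum)
        = (l.map fun g => splitMk R F (FreeAlgebra.ι F g)).sum := by
    intro l; rw [map_list_sum, List.map_map]; rfl
  rw [map_neg, map_neg, h1, h1, neg_inj, List.map_cons, List.sum_cons] at heq
  exact eq_sub_of_add_eq heq

/-- The images in `A_Γ` of the distinguished edges `{e_x : x ∈ Γ₊}` generate `A_Γ` as an
`F`-algebra and are `F`-linearly independent in `A_Γ`. -/
theorem distinguishedEdges_generate_and_linearIndependent
    {Γ : Type} [PartialOrder Γ] [DecidableEq Γ] [Fintype Γ]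
    (R : RankedPoset Γ) (F : Type) [Field F]
    (de : Γ → Γ) (hde : ∀ x, x ≠ R.star → de x ⋖ x) :
    Algebra.adjoin F (Set.range fun x : {x : Γ // x ≠ R.star} =>
        splitMk R F (FreeAlgebra.ι F ⟨(x.1, de x.1), hde x.1 x.2⟩)) = ⊤ ∧
      LinearIndependent F (fun x : {x : Γ // x ≠ R.star} =>
        splitMk R F (FreeAlgebra.ι F ⟨(x.1, de x.1), hde x.1 x.2⟩)) := by
  constructor
  · -- generation
    rw [eq_top_iff]
    rintro z -
    obtain ⟨w, rfl⟩ := RingQuot.mkAlgHom_surjective F (SplitRel R F) z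
    have hw : w ∈ Algebra.adjoin F (Set.range (FreeAlgebra.ι F)) := by
      rw [FreeAlgebra.adjoin_range_ι]; trivial
    show splitMk R F w ∈ _
    refine Algebra.adjoin_induction ?_ ?_ ?_ ?_ hw
    · rintro w ⟨e, rfl⟩
      rw [splitMk_edge R F de hde e]
      have hmem : ∀ (x : Γ), ((chainList R de hde (R.rk x) x).map
          (fun g => splitMk R F (FreeAlgebra.ι F g))).sum
            ∈ Algebra.adjoin F (Set.range fun x : {x : Γ // x ≠ R.star} =>
              splitMk R F (FreeAlgebra.ι F ⟨(x.1, de x.1), hde x.1 x.2⟩)) := by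
        intro x
        refine list_sum_mem ?_
        intro y hy
        obtain ⟨g, hg, rfl⟩ := List.mem_map.1 hy
        obtain ⟨z, hz, rfl⟩ := chainList_mem R de hde _ x g hg
        exact Algebra.subset_adjoin ⟨⟨z, hz⟩, rfl⟩
      exact sub_mem (hmem _) (hmem _)
    · intro r
      rw [AlgHom.commutes]
      exact Subalgebra.algebraMap_mem _ r
    · intro p q hp hq hp' hq'
      rw [map_add]; exact add_mem hp' hq'
    · intro p q hp hq hp' hq'
      rw [map_mul]; exact mul_mem hp' hq'
  · -- linear independence
    let v : RankedPoset.Edge Γ → (Γ → F) := fun e => Pi.single e.1.1 1 - Pi.single e.1.2 1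
    let ψ : FreeAlgebra F (RankedPoset.Edge Γ) →ₐ[F] TrivSqZeroExt F (Γ → F) :=
      FreeAlgebra.lift F (fun e => TrivSqZeroExt.inr (v e))
    have hpres : ∀ ⦃x y⦄, SplitRel R F x y → ψ x = ψ y := by
      rintro x y ⟨a, b, hab, l, l', j, hl, hl', hj⟩
      have key : ∀ m : List (RankedPoset.Edge Γ), IsPath b a m →
          ψ (eCoeff F m j)
            = ((Polynomial.X : Polynomial (TrivSqZeroExt F (Γ → F))) ^ (R.rk b - R.rk a + 1)
              - Polynomial.C (TrivSqZeroExt.inr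
                  (Pi.single b 1 - Pi.single a 1)) *
                Polynomial.X ^ (R.rk b - R.rk a)).coeff (R.rk b - R.rk a - j + 1) := by
        intro m hm
        obtain ⟨hrk, hsum⟩ := isPath_facts R F m b a hm
        have hlen : m.length = R.rk b - R.rk a := by omega
        have hmap : Polynomial.map (ψ : FreeAlgebra F (RankedPoset.Edge Γ) →+* TrivSqZeroExt F (Γ → F))
            (pathPoly F m)
            = ((m.map v).map fun mm =>
                (Polynomial.X : Polynomial (TrivSqZeroExt F (Γ → F)))
                  - Polynomial.C (TrivSqZeroExt.inr mm)).prod := by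
          rw [pathPoly, ← Polynomial.coe_mapRingHom, map_list_prod, List.map_map, List.map_map]
          refine congrArg List.prod (List.map_congr_left fun e _ => ?_)
          simp only [Function.comp_apply, Polynomial.coe_mapRingHom, Polynomial.map_sub,
            Polynomial.map_X, Polynomial.map_C]
          rw [show (ψ : FreeAlgebra F (RankedPoset.Edge Γ) →+* TrivSqZeroExt F (Γ → F))
              (FreeAlgebra.ι F e) = TrivSqZeroExt.inr (v e) from FreeAlgebra.lift_ι_apply _ _]
        rw [eCoeff]
        have hcm : ψ ((pathPoly F m).coeff (m.length - j))
            = (Polynomial.map (ψ : FreeAlgebra F (RankedPoset.Edge Γ) →+* TrivSqZeroExt F (Γ → F))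
                (pathPoly F m)).coeff (m.length - j) := by
          rw [Polynomial.coeff_map]; rfl
        rw [hcm, ← Polynomial.coeff_mul_X, hmap, tsze_prod F (m.map v), List.length_map]
        simp only [v]
        rw [hsum, hlen]
      rw [key l hl, key l' hl']
    let Φ : SplittingAlgebra R F →ₐ[F] TrivSqZeroExt F (Γ → F) :=
      RingQuot.liftAlgHom F ⟨ψ, hpres⟩
    let L : SplittingAlgebra R F →ₗ[F] (Γ → F) :=
      (TrivSqZeroExt.sndHom F (Γ → F)).comp Φ.toLinearMap
    apply LinearIndependent.of_comp L
    have hLf : (⇑L ∘ fun x : {x : Γ // x ≠ R.star} =>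
        splitMk R F (FreeAlgebra.ι F ⟨(x.1, de x.1), hde x.1 x.2⟩))
        = fun x : {x : Γ // x ≠ R.star} =>
            (Pi.single x.1 1 - Pi.single (de x.1) 1 : Γ → F) := by
      funext x
      show (TrivSqZeroExt.sndHom F (Γ → F)) (Φ (splitMk R F (FreeAlgebra.ι F _))) = _
      rw [show Φ (splitMk R F (FreeAlgebra.ι F ⟨(x.1, de x.1), hde x.1 x.2⟩))
          = ψ (FreeAlgebra.ι F ⟨(x.1, de x.1), hde x.1 x.2⟩) from
        RingQuot.liftAlgHom_mkAlgHom_apply F ψ hpres _]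
      rw [FreeAlgebra.lift_ι_apply]
      exact TrivSqZeroExt.snd_inr F _
    rw [hLf]
    rw [Fintype.linearIndependent_iff]
    intro c hc
    set N := Finset.univ.sup R.rk with hN
    have hrkle : ∀ x : Γ, R.rk x ≤ N := fun x => Finset.le_sup (Finset.mem_univ x)
    have main : ∀ n, ∀ x : {x : Γ // x ≠ R.star}, N + 1 - R.rk x.1 ≤ n → c x = 0 := by
      intro n
      induction n with
      | zero =>
        intro x hx
        have := hrkle x.1
        omega
      | succ n ih =>
        intro x hx
        have hz := congrFun hc x.1
        simp only [Finset.sum_apply, Pi.smul_apply, Pi.sub_apply, Pi.single_apply,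
          smul_eq_mul, Pi.zero_apply, mul_sub] at hz
        rw [Finset.sum_sub_distrib] at hz
        have h1 : ∑ y : {x : Γ // x ≠ R.star}, c y * (if x.1 = y.1 then (1:F) else 0)
            = c x := by
          have : ∀ y : {x : Γ // x ≠ R.star},
              c y * (if x.1 = y.1 then (1:F) else 0)
                = if x = y then c y else 0 := by
            intro y
            by_cases h : x = y
            · rw [if_pos h, if_pos (by rw [h]), mul_one]
            · rw [if_neg h, if_neg (fun hh => h (Subtype.ext hh)), mul_zero]
          rw [Finset.sum_congr rfl fun y _ => this y, Finset.sum_ite_eq]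
          simp
        have h2 : ∑ y : {x : Γ // x ≠ R.star}, c y * (if x.1 = de y.1 then (1:F) else 0)
            = 0 := by
          refine Finset.sum_eq_zero fun y _ => ?_
          by_cases h : x.1 = de y.1
          · have hcov : de y.1 ⋖ y.1 := hde y.1 y.2
            have : R.rk y.1 = R.rk (de y.1) + 1 := R.rk_covBy hcov
            rw [← h] at this
            have : c y = 0 := ih y (by omega)
            rw [this, zero_mul]
          · rw [if_neg h, mul_zero]
        rw [h1, h2, sub_zero] at hz
        exact hz
    exact fun i => main (N + 1) i (by omega)
end

section
/- Let A be an associative unital F-algebra and suppose given elements f(b,a) ∈ A for every pair a < b in Γ such that f(b,a)·f(a,c) = f(b,c) whenever c < a < b. Define left A-module maps d : A ⊗_F Ĉ_n → A ⊗_F Ĉ_{n−1} for n ≥ 0 by d(m ⊗ [(b_n > ⋯ > b₀); b,q]) = m·f(b,b_n) ⊗ [(b_{n−1} > ⋯ > b₀); b_n, q − d(b,b_n)] − m ⊗ δ̂[(b_n > ⋯ > b₀); b,q]. Then d ∘ d = 0; that is, (A ⊗_F Ĉ_•, d) is a chain complex of free left A-modules. -/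
variable {Γ : Type} [PartialOrder Γ]

/-- A basis element `[(b_n > ⋯ > b₀); b, q]` of the `(b,q)`-summand of `Ĉ_{n-1}`:
here `b ∈ Γ₊`, `1 ≤ q ≤ rk b`, and `b > b_n > ⋯ > b₀` is a strictly decreasing chain
(recorded as the list `l = [b_n, …, b₀]` of length `n`) contained in
`Γ_{b,q} = {a : * < a < b, rk b - rk a ≤ q - 1}`. -/
structure ChainIdx (R : RankedPoset Γ) (n : ℕ) where
  b : Γ
  q : ℕ
  l : List Γ
  hq1 : 1 ≤ q
  hq2 : q ≤ R.rk b
  hlen : l.length = n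
  hpair : List.Pairwise (· > ·) (b :: l)
  hmem : ∀ a ∈ l, R.star < a ∧ R.rk b - R.rk a ≤ q - 1

namespace ChainIdx

variable {R : RankedPoset Γ} {n : ℕ}

theorem l_ne_nil (β : ChainIdx R (n + 1)) : β.l ≠ [] :=
  List.ne_nil_of_length_pos (by rw [β.hlen]; omega)

theorem head_lt (β : ChainIdx R (n + 1)) : β.l.head β.l_ne_nil < β.b :=
  (List.pairwise_cons.mp β.hpair).1 _ (List.head_mem β.l_ne_nil)

/-- `[(b_{n-1} > ⋯ > b₀); b_n, q - d(b,b_n)]`, the index appearing in the leading term of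
the differential. -/
def top (β : ChainIdx R (n + 1)) : ChainIdx R n where
  b := β.l.head β.l_ne_nil
  q := β.q - (R.rk β.b - R.rk (β.l.head β.l_ne_nil))
  l := β.l.tail
  hq1 := by
    have h1 := (β.hmem _ (List.head_mem β.l_ne_nil)).2
    have h2 := β.hq1
    omega
  hq2 := by
    have h1 := R.rk_strictMono β.head_lt
    have h2 := β.hq2
    omega
  hlen := by
    have := β.hlen
    cases h : β.l with
    | nil => exact absurd h β.l_ne_nil
    | cons a t => simp [h] at this ⊢; omega
  hpair := by
    have h := β.hpair.of_cons
    rwa [← List.cons_head_tail β.l_ne_nil] at h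
  hmem := by
    intro a ha
    have hal : a ∈ β.l := List.mem_of_mem_tail ha
    have h1 := (β.hmem a hal).1
    have h2 := (β.hmem a hal).2
    have hpl : List.Pairwise (· > ·) (β.l.head β.l_ne_nil :: β.l.tail) := by
      have h := β.hpair.of_cons
      rwa [← List.cons_head_tail β.l_ne_nil] at h
    have h3 : a < β.l.head β.l_ne_nil := (List.pairwise_cons.mp hpl).1 a ha
    have h4 := R.rk_strictMono h3
    have h5 := R.rk_strictMono β.head_lt
    have h6 := β.hq1
    have h7 := β.hq2
    exact ⟨h1, by omega⟩

/-- The index obtained by deleting the `i`-th entry of the chain (i.e. `b_{n-i}`). -/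
def del (β : ChainIdx R (n + 1)) (i : Fin (n + 1)) : ChainIdx R n where
  b := β.b
  q := β.q
  l := β.l.eraseIdx i
  hq1 := β.hq1
  hq2 := β.hq2
  hlen := by
    have h1 := List.length_eraseIdx_add_one (l := β.l) (i := i) (by rw [β.hlen]; exact i.isLt)
    have h2 := β.hlen
    omega
  hpair := List.Pairwise.sublist ((β.l.eraseIdx_sublist i).cons₂ β.b) β.hpair
  hmem := fun a ha => β.hmem a ((β.l.eraseIdx_sublist i).subset ha)

end ChainIdx

section Differential

variable (R : RankedPoset Γ) (A : Type) [Ring A]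

/-- The value of the differential on the basis element `1 ⊗ [(b_n > ⋯ > b₀); b,q]`:
`f(b,b_n) ⊗ [(b_{n-1} > ⋯ > b₀); b_n, q - d(b,b_n)] - 1 ⊗ δ̂[(b_n > ⋯ > b₀); b,q]`. -/
noncomputable def dBasis (f : Γ → Γ → A) {n : ℕ} (β : ChainIdx R (n + 1)) :
    ChainIdx R n →₀ A :=
  Finsupp.single β.top (f β.b (β.l.head β.l_ne_nil)) -
    ∑ i : Fin (n + 1), Finsupp.single (β.del i) ((-1 : A) ^ (i : ℕ))

/-- The differential `d : A ⊗ Ĉ_n → A ⊗ Ĉ_{n-1}` (the free `A`-module `A ⊗ Ĉ_n` being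
realized as the finitely supported functions `ChainIdx R (n+1) →₀ A`), extended from
`d(m ⊗ [(b_n > ⋯ > b₀); b,q]) = m·f(b,b_n) ⊗ [(b_{n-1} > ⋯ > b₀); b_n, q - d(b,b_n)]
  - m ⊗ δ̂[(b_n > ⋯ > b₀); b,q]`. -/
noncomputable def dMap (f : Γ → Γ → A) (n : ℕ) :
    (ChainIdx R (n + 1) →₀ A) → (ChainIdx R n →₀ A) :=
  fun x => x.sum fun β m => (dBasis R A f β).mapRange (fun a => m * a) (mul_zero m)

end Differential


/-! On a basis element, `d` is `L - δ̂`, where `L` takes the leading term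
`f(b,b_n) ⊗ [(b_{n-1} > ⋯ > b₀); b_n, q - d(b,b_n)]`. The double faces of `δ̂ ∘ δ̂` cancel in
pairs by the simplicial identity. In `δ̂`, the face omitting `b_n` has leading term
`f(b,b_{n-1}) ⊗ …`, which by the cocycle condition `f(b,b_n) f(b_n,b_{n-1}) = f(b,b_{n-1})` is the
leading term of `L ∘ L`; every other face commutes with taking the leading term, up to a shift of
sign by one, and so cancels against `δ̂ ∘ L`. -/

theorem List.eraseIdx_eraseIdx_of_lt {α : Type*} (l : List α) {i j : ℕ} (h : j < i) :
    (l.eraseIdx i).eraseIdx j = (l.eraseIdx j).eraseIdx (i - 1) := by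
  induction l generalizing i j with
  | nil => simp
  | cons a t ih =>
    obtain ⟨i, rfl⟩ : ∃ i', i = i' + 1 := ⟨i - 1, by omega⟩
    cases j with
    | zero => simp
    | succ j =>
      obtain ⟨i, rfl⟩ : ∃ i', i = i' + 1 := ⟨i - 1, by omega⟩
      simp [ih (Nat.lt_of_succ_lt_succ h)]

/-- The terms are paired off by the involution `(i, j) ↦ (j, i - 1)` for `j < i` and
`(i, j) ↦ (j + 1, i)` for `i ≤ j`, which changes `i + j` by one. -/
theorem Fin.sum_sum_neg_one_pow_smul_eq_zero {R M : Type*} [Ring R] [AddCommGroup M]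
    [Module R M] {n : ℕ} (g : Fin (n + 2) → Fin (n + 1) → M)
    (hg : ∀ i j (h : j.castSucc < i), g i j = g j.castSucc (i.pred (Fin.ne_zero_of_lt h))) :
    ∑ i : Fin (n + 2), ∑ j : Fin (n + 1), (-1 : R) ^ ((i : ℕ) + j) • g i j = 0 := by
  have ne_last {i : Fin (n + 2)} {j : Fin (n + 1)} (h : ¬ j.castSucc < i) : i ≠ Fin.last _ :=
    Fin.ne_last_of_lt ((not_lt.mp h).trans_lt j.castSucc_lt_succ)
  rw [← Finset.sum_product']
  refine Finset.sum_involution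
    (fun p _ => if h : p.2.castSucc < p.1 then (p.2.castSucc, p.1.pred (Fin.ne_zero_of_lt h))
      else (p.2.succ, p.1.castPred (ne_last h)))
    (fun p _ => ?_) (fun p _ _ => ?_) (fun _ _ => Finset.mem_univ _) (fun p _ => ?_)
  · obtain ⟨i, j⟩ := p
    dsimp only
    split_ifs with h
    · have hij : (i : ℕ) + j = j + (i.pred (Fin.ne_zero_of_lt h) : ℕ) + 1 := by
        rw [Fin.val_pred]; have : (j : ℕ) < i := h; omega
      rw [hg i j h, ← add_smul, hij]
      simp [pow_succ]
    · have hlt : (i.castPred (ne_last h)).castSucc < j.succ := by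
        simpa [Fin.lt_def, Nat.lt_succ_iff] using h
      rw [hg _ _ hlt]
      simp only [Fin.castSucc_castPred, Fin.pred_succ, Fin.val_succ, Fin.coe_castPred, ← add_smul]
      rw [show (j : ℕ) + 1 + i = i + j + 1 by ring]
      simp [pow_succ]
  · obtain ⟨i, j⟩ := p
    dsimp only
    split_ifs <;> simp [Prod.ext_iff, Fin.ext_iff] <;> omega
  · obtain ⟨i, j⟩ := p
    dsimp only
    by_cases h : j.castSucc < i
    · have : (j : ℕ) < i := h
      simp [h, Prod.ext_iff, Fin.ext_iff, Fin.lt_def]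
      omega
    · have : ¬ (j : ℕ) < i := h
      simp [h, Prod.ext_iff, Fin.ext_iff, Fin.lt_def]
      omega

namespace ChainIdx

variable {R : RankedPoset Γ} {n : ℕ}

@[ext]
theorem ext {β γ : ChainIdx R n} (hb : β.b = γ.b) (hq : β.q = γ.q) (hl : β.l = γ.l) :
    β = γ := by
  cases β; cases γ
  subst hb hq hl
  rfl

theorem del_b (β : ChainIdx R (n + 1)) (i : Fin (n + 1)) : (β.del i).b = β.b := rfl

theorem del_del (β : ChainIdx R (n + 2)) {i : Fin (n + 2)} {j : Fin (n + 1)}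
    (h : j.castSucc < i) :
    (β.del i).del j = (β.del j.castSucc).del (i.pred (Fin.ne_zero_of_lt h)) :=
  ChainIdx.ext rfl rfl (β.l.eraseIdx_eraseIdx_of_lt h)

theorem top_del_zero (β : ChainIdx R (n + 2)) : (β.del 0).top = β.top.top := by
  have hb := R.rk_strictMono β.head_lt
  have ha := R.rk_strictMono β.top.head_lt
  obtain ⟨b, q, _ | ⟨a, _ | ⟨c, t⟩⟩, _, _, hlen, _, _⟩ := β
  · simp at hlen
  · simp at hlen
  ext1
  · rfl
  · -- `q - (rk b - rk a) - (rk a - rk c) = q - (rk b - rk c)` since `rk c < rk a < rk b`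
    simp [top, del] at ha hb ⊢
    omega
  · rfl

theorem top_del_succ (β : ChainIdx R (n + 2)) (j : Fin (n + 1)) :
    (β.del j.succ).top = β.top.del j := by
  obtain ⟨b, q, _ | ⟨a, t⟩, _, _, hlen, _, _⟩ := β
  · simp at hlen
  ext1 <;> simp [top, del]

/-- `δ̂` on a basis element. -/
noncomputable def boundary (A : Type) [Ring A] (β : ChainIdx R (n + 1)) : ChainIdx R n →₀ A :=
  ∑ i, Finsupp.single (β.del i) ((-1 : A) ^ (i : ℕ))

variable {A : Type} [Ring A]

theorem sum_neg_one_pow_smul_boundary_del (β : ChainIdx R (n + 2)) :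
    ∑ i : Fin (n + 2), (-1 : A) ^ (i : ℕ) • (β.del i).boundary A = 0 := by
  have := Fin.sum_sum_neg_one_pow_smul_eq_zero (R := A)
    (fun i j => Finsupp.single ((β.del i).del j) (1 : A)) fun i j h => by rw [β.del_del h]
  simpa only [boundary, Finset.smul_sum, Finsupp.smul_single', Finsupp.smul_single_one, mul_one,
    ← pow_add] using this

theorem dBasis_eq_single_top_sub_boundary (f : Γ → Γ → A) (β : ChainIdx R (n + 1)) :
    dBasis R A f β = Finsupp.single β.top (f β.b β.top.b) - β.boundary A :=
  rfl

theorem sum_neg_one_pow_smul_single_top_del {f : Γ → Γ → A}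
    (hf : ∀ a b c : Γ, c < a → a < b → f b a * f a c = f b c) (β : ChainIdx R (n + 2)) :
    ∑ i : Fin (n + 2), (-1 : A) ^ (i : ℕ) • Finsupp.single (β.del i).top (f β.b (β.del i).top.b) =
      f β.b β.top.b • dBasis R A f β.top := by
  rw [Fin.sum_univ_succ, top_del_zero, dBasis_eq_single_top_sub_boundary, smul_sub, boundary,
    Finset.smul_sum, sub_eq_add_neg, ← Finset.sum_neg_distrib]
  simp only [top_del_succ, del_b]
  congr 1
  · rw [Fin.val_zero, pow_zero, one_smul, Finsupp.smul_single',
      hf _ _ β.top.top.b β.top.head_lt β.head_lt]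
  · refine Finset.sum_congr rfl fun j _ => ?_
    rw [Finsupp.smul_single', Finsupp.smul_single', ← Finsupp.single_neg, Fin.val_succ, pow_succ,
      mul_neg_one, neg_mul, ((Commute.neg_one_left _).pow_left _).eq]

end ChainIdx

variable {R : RankedPoset Γ} {A : Type} [Ring A]

theorem linearCombination_dBasis_dBasis {f : Γ → Γ → A} {n : ℕ}
    (hf : ∀ a b c : Γ, c < a → a < b → f b a * f a c = f b c) (β : ChainIdx R (n + 2)) :
    Finsupp.linearCombination A (dBasis R A f) (dBasis R A f β) = 0 := by
  rw [ChainIdx.dBasis_eq_single_top_sub_boundary, ChainIdx.boundary, map_sub, map_sum]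
  simp only [Finsupp.linearCombination_single, ChainIdx.dBasis_eq_single_top_sub_boundary f,
    smul_sub, Finset.sum_sub_distrib, ChainIdx.sum_neg_one_pow_smul_boundary_del, sub_zero,
    ChainIdx.del_b, ChainIdx.sum_neg_one_pow_smul_single_top_del hf, sub_self]

theorem dMap_eq_linearCombination (f : Γ → Γ → A) (n : ℕ) :
    dMap R A f n = Finsupp.linearCombination A (dBasis R A f) := by
  funext x
  rw [dMap, Finsupp.linearCombination_apply]
  refine Finsupp.sum_congr fun β _ => ?_
  ext
  rfl

theorem dMap_comp_dMap_eq_zero_general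
    {Γ : Type} [PartialOrder Γ] (R : RankedPoset Γ)
    (A : Type) [Ring A]
    (f : Γ → Γ → A)
    (hf : ∀ a b c : Γ, c < a → a < b → f b a * f a c = f b c) :
    (∀ n : ℕ, IsLinearMap A (dMap R A f n)) ∧
      (∀ (n : ℕ) (x : ChainIdx R (n + 2) →₀ A),
        dMap R A f n (dMap R A f (n + 1) x) = 0) := by
  refine ⟨fun n => dMap_eq_linearCombination f n ▸ LinearMap.isLinear _, fun n x => ?_⟩
  have hd : (Finsupp.linearCombination A (dBasis R A f) ∘ dBasis R A f : ChainIdx R (n + 2) → _)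
      = 0 := funext (linearCombination_dBasis_dBasis hf)
  rw [dMap_eq_linearCombination, dMap_eq_linearCombination, Finsupp.apply_linearCombination, hd,
    Finsupp.linearCombination_zero_apply]

/-- Let `A` be an associative unital `F`-algebra with elements `f(b,a)` for `a < b` in `Γ`
satisfying `f(b,a)·f(a,c) = f(b,c)` for `c < a < b`.  Then the `A`-linear maps
`d : A ⊗ Ĉ_n → A ⊗ Ĉ_{n-1}` satisfy `d ∘ d = 0`; that is, `(A ⊗ Ĉ_•, d)` is a chain
complex of free left `A`-modules. -/
theorem dMap_comp_dMap_eq_zero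
    {Γ : Type} [PartialOrder Γ] [Fintype Γ] (R : RankedPoset Γ)
    (F : Type) [Field F] (A : Type) [Ring A] [Algebra F A]
    (f : Γ → Γ → A)
    (hf : ∀ a b c : Γ, c < a → a < b → f b a * f a c = f b c) :
    (∀ n : ℕ, IsLinearMap A (dMap R A f n)) ∧
      (∀ (n : ℕ) (x : ChainIdx R (n + 2) →₀ A),
        dMap R A f n (dMap R A f (n + 1) x) = 0) :=
  dMap_comp_dMap_eq_zero_general R A f hf
end

section
/- Let A be a good-monomial algebra for Γ over F, graded as an F-algebra so that each good monomial e(x₁,k₁)⋯e(x_r,k_r) is homogeneous of degree k₁+⋯+k_r, and let A₁ = span_F{e(x,1) : x ∈ Γ₊} be its degree-1 component. Then the canonical F-algebra homomorphism from the tensor algebra T(A₁) to A is surjective, and its kernel is generated as a two-sided ideal by its homogeneous component of degree 2 (i.e., A is a quadratic algebra) if and only if Γ is uniform. -/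
/-- `a ∈ S_x(1)`: `a < x` and `d(x,a) = 1`. -/
def memS1 {Γ : Type} [PartialOrder Γ] (R : RankedPoset Γ) (x a : Γ) : Prop :=
  a < x ∧ R.rk x - R.rk a = 1

/-- `Γ` is uniform if for every `x ∈ Γ₊` the equivalence relation on `S_x(1)` generated
by `a ∼_x b ↔ ∃ c ∈ S_a(1) ∩ S_b(1)` has exactly one equivalence class. -/
def RankedPoset.Uniform {Γ : Type} [PartialOrder Γ] (R : RankedPoset Γ) : Prop :=
  ∀ x : Γ, x ≠ R.star →
    (∃ a, memS1 R x a) ∧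
      ∀ a b : Γ, memS1 R x a → memS1 R x b →
        Relation.EqvGen
          (fun u v => memS1 R x u ∧ memS1 R x v ∧ ∃ c, memS1 R u c ∧ memS1 R v c) a b

section GoodMonomial

variable {Γ : Type} [PartialOrder Γ] (R : RankedPoset Γ)

/-- A list `[(x₁,k₁),…,(x_r,k_r)]` indexes a good monomial `e(x₁,k₁)⋯e(x_r,k_r)` if each
`xᵢ ∈ Γ₊`, `1 ≤ kᵢ ≤ rk xᵢ`, and no `(xᵢ,kᵢ) ⊵ (xᵢ₊₁,kᵢ₊₁)`, i.e. it never happens that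
`xᵢ > xᵢ₊₁` with `kᵢ = rk xᵢ - rk xᵢ₊₁`. -/
def IsGoodList (l : List (Γ × ℕ)) : Prop :=
  (∀ p ∈ l, p.1 ≠ R.star ∧ 1 ≤ p.2 ∧ p.2 ≤ R.rk p.1) ∧
    List.Chain' (fun p q => ¬(q.1 < p.1 ∧ p.2 = R.rk p.1 - R.rk q.1)) l

variable (A : Type) [Ring A] (e : Γ → ℕ → A)

/-- The good monomial `e(x₁,k₁)⋯e(x_r,k_r)` indexed by a good list. -/
def goodMonomial (l : {l : List (Γ × ℕ) // IsGoodList R l}) : A :=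
  (l.1.map fun p => e p.1 p.2).prod

variable (F : Type) [Field F] [Algebra F A]

/-- The degree-one component `A₁ = span_F {e(x,1) : x ∈ Γ₊}`. -/
noncomputable def genOne : Submodule F A :=
  Submodule.span F {a | ∃ x : Γ, x ≠ R.star ∧ a = e x 1}

/-- The canonical `F`-algebra homomorphism `T(A₁) → A` from the tensor algebra on `A₁`. -/
noncomputable def canMap : TensorAlgebra F ↥(genOne R A e F) →ₐ[F] A :=
  TensorAlgebra.lift F (genOne R A e F).subtype

/-- The homogeneous component of degree 2 of the tensor algebra `T(A₁)`:
the span of the products `ι(u)·ι(v)`. -/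
noncomputable def degTwo : Submodule F (TensorAlgebra F ↥(genOne R A e F)) :=
  Submodule.span F {w | ∃ u v : ↥(genOne R A e F),
    w = TensorAlgebra.ι F u * TensorAlgebra.ι F v}

end GoodMonomial


theorem Finsupp.linearCombination_eq_zero_of_factorsThrough {R M α β : Type*} [Semiring R]
    [AddCommMonoid M] [Module R M] {v : α → M} {f : α → β} (hv : v.FactorsThrough f)
    {d : α →₀ R} (hd : d.mapDomain f = 0) : linearCombination R v d = 0 := by
  rw [← hv.extend_comp (0 : β → M), ← linearCombination_mapDomain, hd, map_zero]

/-- The relation `u ∼_x v`. -/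
def CoverAdj {Γ : Type} [PartialOrder Γ] (x u v : Γ) : Prop :=
  u ⋖ x ∧ v ⋖ x ∧ ∃ c, c ⋖ u ∧ c ⋖ v

def idxProd {Γ M : Type*} [Monoid M] (E : Γ → ℕ → M) (l : List (Γ × ℕ)) : M :=
  (l.map fun p => E p.1 p.2).prod

section TransferMatrix

variable (F : Type) [Field F] {Γ : Type} [PartialOrder Γ]

open Classical in
/-- The transfer matrix of the letter `u` in the automaton `0 →[x₀] 1 →[⋖ x₀] 2 →[C] 3`. -/
noncomputable def transferMatrix (x₀ : Γ) (C : Γ → Prop) (u : Γ) : Matrix (Fin 4) (Fin 4) F :=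
  (if u = x₀ then Matrix.single 0 1 1 else 0) + (if u ⋖ x₀ then Matrix.single 1 2 1 else 0) +
    (if C u then Matrix.single 2 3 1 else 0)

variable {F}

open Classical in
lemma transferMatrix_mul (x₀ : Γ) (C : Γ → Prop) (u v : Γ) :
    transferMatrix F x₀ C u * transferMatrix F x₀ C v =
      (if u = x₀ ∧ v ⋖ x₀ then Matrix.single 0 2 1 else 0) +
        (if u ⋖ x₀ ∧ C v then Matrix.single 1 3 1 else 0) := by
  simp only [transferMatrix]
  split_ifs <;> simp_all [add_mul, mul_add, Matrix.single_mul_single_same,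
    Matrix.single_mul_single_of_ne]

open Classical in
lemma transferMatrix_mul_mul_apply (x₀ : Γ) (C : Γ → Prop) (u v w : Γ) :
    (transferMatrix F x₀ C u * transferMatrix F x₀ C v * transferMatrix F x₀ C w) 0 3 =
      if u = x₀ ∧ v ⋖ x₀ ∧ C w then 1 else 0 := by
  rw [transferMatrix_mul, transferMatrix]
  split_ifs <;> simp_all [Matrix.mul_apply, Matrix.single_apply]

end TransferMatrix

namespace RankedPoset

variable {Γ : Type} [PartialOrder Γ] (R : RankedPoset Γ)

section Poset

variable {a b x y : Γ}

lemma star_lt (hx : x ≠ R.star) : R.star < x :=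
  (R.bot_le x).lt_of_ne' hx

lemma rk_pos (hx : x ≠ R.star) : 0 < R.rk x := by
  simpa [R.rk_star] using R.rk_strictMono (R.star_lt hx)

lemma rk_eq_zero_iff : R.rk x = 0 ↔ x = R.star :=
  ⟨fun h => by_contra fun hx => (R.rk_pos hx).ne' h, fun h => h ▸ R.rk_star⟩

lemma ne_star_of_covBy (h : a ⋖ x) : x ≠ R.star :=
  fun hx => (R.bot_le a).not_gt (hx ▸ h.lt)

lemma eq_of_le_of_rk_eq (h : x ≤ y) (hr : R.rk x = R.rk y) : x = y :=
  h.eq_or_lt.resolve_right fun hlt => (R.rk_strictMono hlt).ne hr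

lemma covBy_iff_rk (h : a < x) : a ⋖ x ↔ R.rk x = R.rk a + 1 := by
  refine ⟨fun hc => R.rk_covBy hc, fun hr => ⟨h, fun w haw hwx => ?_⟩⟩
  have := R.rk_strictMono haw
  have := R.rk_strictMono hwx
  omega

lemma memS1_iff_covBy : memS1 R x a ↔ a ⋖ x := by
  unfold memS1
  refine ⟨fun ⟨h, hr⟩ => ?_, fun h => ⟨h.lt, by rw [R.rk_covBy h]; omega⟩⟩
  have := R.rk_strictMono h
  exact (R.covBy_iff_rk h).2 (by omega)

include R in
lemma exists_le_covBy (h : y < x) : ∃ b, y ≤ b ∧ b ⋖ x := by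
  induction hn : R.rk x - R.rk y using Nat.strong_induction_on generalizing y with
  | _ n ih =>
    by_cases hc : y ⋖ x
    · exact ⟨y, le_rfl, hc⟩
    obtain ⟨w, hyw, hwx⟩ : ∃ w, y < w ∧ w < x := by simpa [CovBy, h] using hc
    have := R.rk_strictMono hyw
    have := R.rk_strictMono hwx
    obtain ⟨b, hwb, hb⟩ := ih _ (by omega) hwx rfl
    exact ⟨b, hyw.le.trans hwb, hb⟩

lemma exists_covBy (hx : x ≠ R.star) : ∃ a, a ⋖ x :=
  (R.exists_le_covBy (R.star_lt hx)).imp fun _ h => h.2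

lemma uniform_iff :
    R.Uniform ↔ ∀ ⦃x a b : Γ⦄, a ⋖ x → b ⋖ x → Relation.EqvGen (CoverAdj x) a b := by
  simp only [RankedPoset.Uniform, memS1_iff_covBy]
  exact ⟨fun h x a b ha hb => (h x (R.ne_star_of_covBy ha)).2 a b ha hb,
    fun h x hx => ⟨R.exists_covBy hx, fun a b => @h x a b⟩⟩

lemma eqvGen_coverAdj_of_rk_le_two (ha : a ⋖ x) (hb : b ⋖ x) (hx : R.rk x ≤ 2) :
    Relation.EqvGen (CoverAdj x) a b := by
  have := R.rk_covBy ha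
  have := R.rk_covBy hb
  by_cases h0 : R.rk a = 0
  · rw [R.rk_eq_zero_iff.1 h0, R.rk_eq_zero_iff.1 (by omega : R.rk b = 0)]
    exact .refl _
  have hstar : ∀ {u}, u ⋖ x → R.star ⋖ u := fun {u} hu => by
    have := R.rk_covBy hu
    refine (R.covBy_iff_rk (R.star_lt fun h => by simp_all [R.rk_star])).2 ?_
    rw [R.rk_star]
    omega
  exact .rel _ _ ⟨ha, hb, R.star, hstar ha, hstar hb⟩

end Poset

section NormalForm

/-- `Γ₊`. -/
abbrev Plus : Type := {x : Γ // x ≠ R.star}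

/-- `(x, j) ⊵ (y, k)`. -/
def Dominates (p q : Γ × ℕ) : Prop := q.1 < p.1 ∧ p.2 = R.rk p.1 - R.rk q.1

def IsIndex (p : Γ × ℕ) : Prop := p.1 ≠ R.star ∧ 1 ≤ p.2 ∧ p.2 ≤ R.rk p.1

/-- Relation (ii) of a good-monomial algebra. -/
def MergeRule {M : Type*} [Monoid M] (E : Γ → ℕ → M) : Prop :=
  ∀ x y : Γ, ∀ j k : ℕ, y ≠ R.star → y < x → j = R.rk x - R.rk y →
    1 ≤ k → k ≤ R.rk y → E x j * E y k = E x (j + k)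

open Classical in
/-- Left multiplication of a good monomial by `e(p)`, merging by (ii) for as long as possible. -/
noncomputable def insertIdx : Γ × ℕ → List (Γ × ℕ) → List (Γ × ℕ)
  | p, [] => [p]
  | p, q :: t => if R.Dominates p q then insertIdx (p.1, p.2 + q.2) t else p :: q :: t

noncomputable def normalForm (w : List R.Plus) : List (Γ × ℕ) :=
  w.foldr (fun (x : R.Plus) l => R.insertIdx ((x : Γ), 1) l) []

variable {R} {M : Type*} [Monoid M]

lemma IsIndex.merge {p q : Γ × ℕ} (hp : R.IsIndex p) (hq : R.IsIndex q)
    (h : R.Dominates p q) : R.IsIndex (p.1, p.2 + q.2) := by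
  obtain ⟨hp0, hp1, -⟩ := hp
  obtain ⟨-, -, hq2⟩ := hq
  obtain ⟨hlt, hj⟩ := h
  have := R.rk_strictMono hlt
  exact ⟨hp0, by omega, by simp only; omega⟩

lemma isIndex_plus (x : R.Plus) : R.IsIndex ((x : Γ), 1) :=
  ⟨x.2, le_rfl, R.rk_pos x.2⟩

lemma isGoodList_insertIdx {p : Γ × ℕ} {t : List (Γ × ℕ)} (hp : R.IsIndex p)
    (ht : IsGoodList R t) : IsGoodList R (R.insertIdx p t) := by
  induction t generalizing p with
  | nil => exact ⟨fun r hr => by rw [insertIdx, List.mem_singleton] at hr; exact hr ▸ hp,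
      List.isChain_singleton _⟩
  | cons q t ih =>
    have hq : R.IsIndex q := ht.1 q List.mem_cons_self
    by_cases hpq : R.Dominates p q
    · rw [insertIdx, if_pos hpq]
      exact ih (hp.merge hq hpq) ⟨fun r hr => ht.1 r (List.mem_cons_of_mem q hr), ht.2.tail⟩
    · rw [insertIdx, if_neg hpq]
      refine ⟨?_, List.isChain_cons_cons.2 ⟨hpq, ht.2⟩⟩
      rintro r (_ | ⟨_, hr⟩)
      exacts [hp, ht.1 r hr]

lemma isGoodList_normalForm (w : List R.Plus) : IsGoodList R (R.normalForm w) := by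
  induction w with
  | nil => exact ⟨by simp [normalForm], List.isChain_nil⟩
  | cons x w ih => exact isGoodList_insertIdx (isIndex_plus x) ih

lemma idxProd_insertIdx {E : Γ → ℕ → M} (hE : R.MergeRule E) {p : Γ × ℕ} {t : List (Γ × ℕ)}
    (hp : R.IsIndex p) (ht : IsGoodList R t) :
    idxProd E (R.insertIdx p t) = E p.1 p.2 * idxProd E t := by
  induction t generalizing p with
  | nil => simp [insertIdx, idxProd]
  | cons q t ih =>
    have hq : R.IsIndex q := ht.1 q List.mem_cons_self
    by_cases hpq : R.Dominates p q
    · rw [insertIdx, if_pos hpq,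
        ih (hp.merge hq hpq) ⟨fun r hr => ht.1 r (List.mem_cons_of_mem q hr), ht.2.tail⟩,
        ← hE _ _ _ _ hq.1 hpq.1 hpq.2 hq.2.1 hq.2.2]
      simp [idxProd, mul_assoc]
    · rw [insertIdx, if_neg hpq]
      simp [idxProd]

lemma idxProd_normalForm {E : Γ → ℕ → M} (hE : R.MergeRule E) (w : List R.Plus) :
    idxProd E (R.normalForm w) = (w.map fun x : R.Plus => E x 1).prod := by
  induction w with
  | nil => simp [normalForm, idxProd]
  | cons x w ih =>
    rw [List.map_cons, List.prod_cons, ← ih]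
    exact idxProd_insertIdx hE (isIndex_plus x) (isGoodList_normalForm w)

open Classical in
lemma normalForm_pair (x a : R.Plus) :
    R.normalForm [x, a] =
      if (a : Γ) ⋖ x then [((x : Γ), 2)] else [((x : Γ), 1), ((a : Γ), 1)] := by
  have : R.Dominates ((x : Γ), 1) ((a : Γ), 1) ↔ (a : Γ) ⋖ x := by
    show (a : Γ) < x ∧ 1 = R.rk x - R.rk a ↔ _
    refine ⟨fun ⟨hlt, hr⟩ => (R.covBy_iff_rk hlt).2 ?_, fun h => ⟨h.lt, ?_⟩⟩
    · have := R.rk_strictMono hlt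
      omega
    · have := R.rk_covBy h
      omega
  simp only [normalForm, List.foldr, insertIdx, this]

end NormalForm

section ChainProd

noncomputable def lowerCover (x : Γ) : Γ := @Classical.epsilon Γ ⟨x⟩ (· ⋖ x)

lemma lowerCover_covBy {x : Γ} (hx : x ≠ R.star) : lowerCover x ⋖ x :=
  @Classical.epsilon_spec Γ (· ⋖ x) (R.exists_covBy hx)

open Classical in
/-- A saturated chain `x ⋗ x₂ ⋗ ⋯ ⋗ xₙ`, fixed once and for all (for `n ≤ rk x`). -/
noncomputable def stdChain : Γ → ℕ → List R.Plus
  | _, 0 => []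
  | x, n + 1 => if hx : x = R.star then [] else ⟨x, hx⟩ :: stdChain (lowerCover x) n

variable {M : Type*} [Monoid M] (g : R.Plus → M)

def CoverRelations : Prop :=
  ∀ ⦃x a b : R.Plus⦄, (a : Γ) ⋖ x → (b : Γ) ⋖ x → g x * g a = g x * g b

noncomputable def chainProd (x : Γ) (n : ℕ) : M := ((R.stdChain x n).map g).prod

lemma chainProd_zero (x : Γ) : R.chainProd g x 0 = 1 := by
  simp [chainProd, stdChain]

lemma chainProd_succ {x : Γ} (hx : x ≠ R.star) (n : ℕ) :
    R.chainProd g x (n + 1) = g ⟨x, hx⟩ * R.chainProd g (lowerCover x) n := by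
  simp [chainProd, stdChain, hx]

lemma chainProd_one {x : Γ} (hx : x ≠ R.star) : R.chainProd g x 1 = g ⟨x, hx⟩ := by
  rw [chainProd_succ R g hx, chainProd_zero, mul_one]

variable {R g}

lemma CoverRelations.mul_eq_of_normalForm_eq (hg : R.CoverRelations g) {x a y b : R.Plus}
    (h : R.normalForm [x, a] = R.normalForm [y, b]) : g x * g a = g y * g b := by
  rw [normalForm_pair, normalForm_pair] at h
  split_ifs at h with hxa hyb hyb
  · obtain rfl : x = y := Subtype.ext (by simpa using h)
    exact hg hxa hyb
  · simp at h
  · simp at h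
  · simp only [List.cons.injEq, Prod.mk.injEq, and_true] at h
    rw [Subtype.ext h.1, Subtype.ext h.2]

lemma CoverRelations.chainProd_one_mul (hg : R.CoverRelations g) {x u v : Γ} (hu : u ⋖ x)
    (hv : v ⋖ x) :
    R.chainProd g x 1 * R.chainProd g u 1 = R.chainProd g x 1 * R.chainProd g v 1 := by
  have hx := R.ne_star_of_covBy hu
  have := R.rk_covBy hu
  have := R.rk_covBy hv
  have hrk : R.rk u = R.rk v := by omega
  by_cases hu' : u = R.star
  · rw [hu', (R.rk_eq_zero_iff (x := v)).1 (by rw [← hrk, hu', R.rk_star])]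
  have hv' : v ≠ R.star := fun h => hu' (R.rk_eq_zero_iff.1 (by rw [hrk, h, R.rk_star]))
  rw [chainProd_one R g hx, chainProd_one R g hu', chainProd_one R g hv']
  exact hg (x := ⟨x, hx⟩) (a := ⟨u, hu'⟩) (b := ⟨v, hv'⟩) hu hv

theorem chainProd_eq_of_mergeRule {E : Γ → ℕ → M} (hE : R.MergeRule E) {k : ℕ} {x : Γ}
    (hk : 1 ≤ k) (hkx : k ≤ R.rk x) : R.chainProd (fun y : R.Plus => E y 1) x k = E x k := by
  induction k generalizing x with
  | zero => omega
  | succ k ih =>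
    have hx : x ≠ R.star := fun h => by simp [h, R.rk_star] at hkx
    rw [chainProd_succ R _ hx]
    rcases Nat.eq_zero_or_pos k with rfl | hk
    · rw [chainProd_zero, mul_one]
    have hcov := R.lowerCover_covBy hx
    have := R.rk_covBy hcov
    rw [ih hk (by omega), hE _ _ _ _ (fun h => by simp [h, R.rk_star] at this; omega) hcov.lt
      (by omega) hk (by omega), add_comm]

variable (huni : R.Uniform) (hg : R.CoverRelations g)
include huni hg

theorem chainProd_succ_of_covBy {n : ℕ} {x a : Γ} (h : a ⋖ x) (hn : n ≤ R.rk a) :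
    R.chainProd g x (n + 1) = R.chainProd g x 1 * R.chainProd g a n := by
  rw [uniform_iff] at huni
  induction n generalizing x a with
  | zero => rw [chainProd_zero, mul_one]
  | succ n ih =>
    have hx := R.ne_star_of_covBy h
    have := R.rk_covBy h
    -- both sides equal `f (lowerCover x)` resp. `f a`, and `f` is constant on `∼_x`-classes
    let f : Γ → M := fun u => R.chainProd g x 1 * R.chainProd g u (n + 1)
    have hf : ∀ u v, CoverAdj x u v → f u = f v := by
      rintro u v ⟨hu, hv, c, hcu, hcv⟩
      have := R.rk_covBy hu
      have := R.rk_covBy hcu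
      simp only [f, ih hcu (by omega), ih hcv (by omega), ← mul_assoc,
        hg.chainProd_one_mul hu hv]
    calc R.chainProd g x (n + 1 + 1) = f (lowerCover x) := by
          simp only [f]
          rw [chainProd_one R g hx, chainProd_succ R g hx]
      _ = f a := congrArg (Quot.lift f hf) (Quot.eqvGen_sound (huni (R.lowerCover_covBy hx) h))

theorem chainProd_mul_chainProd {k : ℕ} {x : Γ} (hk : k ≤ R.rk x) :
    ∀ (j : ℕ) (y : Γ), x ≤ y → R.rk y = R.rk x + j →
      R.chainProd g y j * R.chainProd g x k = R.chainProd g y (j + k)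
  | 0, y, hxy, hr => by
    rw [R.eq_of_le_of_rk_eq hxy (by omega), chainProd_zero, one_mul, zero_add]
  | j + 1, y, hxy, hr => by
    obtain ⟨b, hxb, hby⟩ := R.exists_le_covBy (hxy.lt_of_ne (by rintro rfl; omega))
    have := R.rk_covBy hby
    rw [chainProd_succ_of_covBy huni hg hby (by omega), mul_assoc,
      chainProd_mul_chainProd hk j b hxb (by omega),
      ← chainProd_succ_of_covBy huni hg hby (by omega), add_right_comm]

theorem mergeRule_chainProd : R.MergeRule (R.chainProd g) := by
  intro x y j k _ hyx hj _ hk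
  have := R.rk_strictMono hyx
  exact chainProd_mul_chainProd huni hg hk j x hyx.le (by omega)

end ChainProd

section TensorAlgebra

variable (A : Type) [Ring A] (e : Γ → ℕ → A) (F : Type) [Field F] [Algebra F A]

def letter (x : R.Plus) : genOne R A e F := ⟨e x 1, Submodule.subset_span ⟨x, x.2, rfl⟩⟩

noncomputable def word (w : List R.Plus) : TensorAlgebra F (genOne R A e F) :=
  (w.map fun x => TensorAlgebra.ι F (R.letter A e F x)).prod

noncomputable def quadIdeal : TwoSidedIdeal (TensorAlgebra F (genOne R A e F)) :=
  TwoSidedIdeal.span {y | canMap R A e F y = 0 ∧ y ∈ degTwo R A e F}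

variable {R A e F}

lemma word_append (v w : List R.Plus) :
    R.word A e F (v ++ w) = R.word A e F v * R.word A e F w := by
  simp [word]

lemma canMap_ι_letter (x : R.Plus) :
    canMap R A e F (TensorAlgebra.ι F (R.letter A e F x)) = e x 1 := by
  simp [canMap, letter]

lemma canMap_word (w : List R.Plus) :
    canMap R A e F (R.word A e F w) = (w.map fun x : R.Plus => e x 1).prod := by
  simp [word, map_list_prod, canMap_ι_letter]

lemma canMap_word_eq_goodMonomial (hmul : R.MergeRule e) (w : List R.Plus) :
    canMap R A e F (R.word A e F w) =
      goodMonomial R A e ⟨R.normalForm w, isGoodList_normalForm w⟩ := by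
  rw [canMap_word, ← idxProd_normalForm hmul]
  rfl

lemma span_range_letter : Submodule.span F (Set.range (R.letter A e F)) = ⊤ := by
  have : Set.range (R.letter A e F) = Subtype.val ⁻¹' {a | ∃ x : Γ, x ≠ R.star ∧ a = e x 1} := by
    ext y
    constructor
    · rintro ⟨x, rfl⟩
      exact ⟨x, x.2, rfl⟩
    · rintro ⟨x, hx, hxy⟩
      exact ⟨⟨x, hx⟩, Subtype.ext hxy.symm⟩
  rw [this]
  exact Submodule.span_span_coe_preimage

lemma linearIndependent_letter (hli : LinearIndependent F (goodMonomial R A e)) :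
    LinearIndependent F (R.letter A e F) := by
  refine LinearIndependent.of_comp (genOne R A e F).subtype ?_
  let single : R.Plus → {l : List (Γ × ℕ) // IsGoodList R l} := fun x =>
    ⟨R.normalForm [x], isGoodList_normalForm [x]⟩
  have hinj : Function.Injective single := fun x y h => by
    simpa [single, normalForm, insertIdx, Subtype.ext_iff] using h
  convert hli.comp single hinj
  ext x
  simp [single, letter, goodMonomial, normalForm, insertIdx]

lemma ι_mem_span_letter (y : genOne R A e F) : TensorAlgebra.ι F y ∈
    Submodule.span F (Set.range fun x => TensorAlgebra.ι F (R.letter A e F x)) := by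
  have hy : y ∈ Submodule.span F (Set.range (R.letter A e F)) := by
    rw [span_range_letter]; trivial
  have := Submodule.mem_map_of_mem (f := TensorAlgebra.ι F) hy
  rwa [Submodule.map_span, ← Set.range_comp] at this

lemma span_range_word : Submodule.span F (Set.range (R.word A e F)) = ⊤ := by
  rw [eq_top_iff]
  rintro z -
  induction z using TensorAlgebra.induction with
  | algebraMap r =>
    rw [Algebra.algebraMap_eq_smul_one]
    exact Submodule.smul_mem _ r (Submodule.subset_span ⟨[], rfl⟩)
  | ι y =>
    refine Submodule.span_mono ?_ (ι_mem_span_letter y)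
    rintro _ ⟨x, rfl⟩
    exact ⟨[x], by simp [word]⟩
  | mul a b ha hb =>
    have := Submodule.mul_mem_mul ha hb
    rw [Submodule.span_mul_span] at this
    refine Submodule.span_mono ?_ this
    rintro _ ⟨_, ⟨v, rfl⟩, _, ⟨w, rfl⟩, rfl⟩
    exact ⟨v ++ w, word_append v w⟩
  | add a b ha hb => exact Submodule.add_mem _ ha hb

lemma degTwo_le_span_word_pair : degTwo R A e F ≤
    Submodule.span F (Set.range fun p : R.Plus × R.Plus => R.word A e F [p.1, p.2]) := by
  rw [degTwo, Submodule.span_le]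
  rintro _ ⟨u, v, rfl⟩
  have := Submodule.mul_mem_mul (ι_mem_span_letter u) (ι_mem_span_letter v)
  rw [Submodule.span_mul_span] at this
  refine Submodule.span_mono ?_ this
  rintro _ ⟨_, ⟨x, rfl⟩, _, ⟨y, rfl⟩, rfl⟩
  exact ⟨(x, y), by simp [word]⟩

noncomputable def liftLetters (hli : LinearIndependent F (goodMonomial R A e)) {B : Type*}
    [Ring B] [Algebra F B] (f : R.Plus → B) : TensorAlgebra F (genOne R A e F) →ₐ[F] B :=
  TensorAlgebra.lift F
    ((Module.Basis.mk (linearIndependent_letter hli) span_range_letter.ge).constr F f)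

lemma liftLetters_ι_letter (hli : LinearIndependent F (goodMonomial R A e)) {B : Type*}
    [Ring B] [Algebra F B] (f : R.Plus → B) (x : R.Plus) :
    liftLetters hli f (TensorAlgebra.ι F (R.letter A e F x)) = f x := by
  rw [liftLetters, TensorAlgebra.lift_ι_apply,
    ← Module.Basis.mk_apply (linearIndependent_letter hli) span_range_letter.ge x,
    Module.Basis.constr_basis]

lemma liftLetters_word (hli : LinearIndependent F (goodMonomial R A e)) {B : Type*}
    [Ring B] [Algebra F B] (f : R.Plus → B) (w : List R.Plus) :
    liftLetters hli f (R.word A e F w) = (w.map f).prod := by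
  simp [word, map_list_prod, liftLetters_ι_letter, Function.comp_def]

end TensorAlgebra

section Kernel

variable {R} {A : Type} [Ring A] {e : Γ → ℕ → A} {F : Type} [Field F] [Algebra F A]

lemma canMap_eq_zero_of_mem_quadIdeal {z : TensorAlgebra F (genOne R A e F)}
    (hz : z ∈ R.quadIdeal A e F) : canMap R A e F z = 0 := by
  have : R.quadIdeal A e F ≤ TwoSidedIdeal.ker (canMap R A e F) :=
    TwoSidedIdeal.span_le.2 fun y hy => (TwoSidedIdeal.mem_ker _).2 hy.1
  exact (TwoSidedIdeal.mem_ker _).1 (this hz)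

theorem canMap_surjective (hmul : R.MergeRule e)
    (hspan : Submodule.span F (Set.range (goodMonomial R A e)) = ⊤) :
    Function.Surjective (canMap R A e F) := by
  have hgen : ∀ p : Γ × ℕ, R.IsIndex p → e p.1 p.2 ∈ (canMap R A e F).range :=
    fun ⟨x, k⟩ ⟨_, hk1, hk2⟩ => (AlgHom.mem_range _).2
      ⟨R.word A e F (R.stdChain x k), by
        rw [canMap_word]
        exact chainProd_eq_of_mergeRule hmul hk1 hk2⟩
  have : Submodule.span F (Set.range (goodMonomial R A e)) ≤
      Subalgebra.toSubmodule (canMap R A e F).range := by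
    rw [Submodule.span_le]
    rintro _ ⟨⟨l, hl⟩, rfl⟩
    refine Subalgebra.list_prod_mem _ fun y hy => ?_
    obtain ⟨p, hp, rfl⟩ := List.mem_map.1 hy
    exact hgen p (hl.1 p hp)
  rw [hspan] at this
  exact fun a => this trivial

lemma canMap_word_triple (hmul : R.MergeRule e) {x a c : R.Plus} (ha : (a : Γ) ⋖ x)
    (hc : (c : Γ) ⋖ a) : canMap R A e F (R.word A e F [x, a, c]) = e x 3 := by
  have := R.rk_covBy ha
  have := R.rk_covBy hc
  have := R.rk_pos c.2
  simp only [canMap_word, List.map_cons, List.map_nil, List.prod_cons, List.prod_nil, mul_one]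
  rw [hmul a c 1 1 c.2 hc.lt (by omega) le_rfl (by omega),
    hmul x a 1 2 a.2 ha.lt (by omega) (by norm_num) (by omega)]

lemma word_pair_sub_mem_quadIdeal (hmul : R.MergeRule e) {x a b : R.Plus} (ha : (a : Γ) ⋖ x)
    (hb : (b : Γ) ⋖ x) : R.word A e F [x, a] - R.word A e F [x, b] ∈ R.quadIdeal A e F := by
  have hx2 : ∀ {c : R.Plus}, (c : Γ) ⋖ x → e x 1 * e c 1 = e x 2 := fun {c} hc => by
    have := R.rk_covBy hc
    exact hmul x c 1 1 c.2 hc.lt (by omega) le_rfl (R.rk_pos c.2)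
  refine TwoSidedIdeal.subset_span ⟨?_, Submodule.sub_mem _ ?_ ?_⟩
  · simp [canMap_word, hx2 ha, hx2 hb]
  · exact Submodule.subset_span ⟨R.letter A e F x, R.letter A e F a, by simp [word]⟩
  · exact Submodule.subset_span ⟨R.letter A e F x, R.letter A e F b, by simp [word]⟩

variable (hli : LinearIndependent F (goodMonomial R A e)) (hmul : R.MergeRule e)
include hli hmul

theorem map_eq_zero_of_factorsThrough {κ N : Type*} [AddCommGroup N] [Module F N]
    (v : κ → List R.Plus) (Φ : TensorAlgebra F (genOne R A e F) →ₗ[F] N)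
    (hΦ : (fun i => Φ (R.word A e F (v i))).FactorsThrough (fun i => R.normalForm (v i)))
    {z : TensorAlgebra F (genOne R A e F)}
    (hz : z ∈ Submodule.span F (Set.range fun i => R.word A e F (v i)))
    (h0 : canMap R A e F z = 0) : Φ z = 0 := by
  rw [← Finsupp.range_linearCombination] at hz
  obtain ⟨d, rfl⟩ := hz
  let nf : κ → {l // IsGoodList R l} := fun i => ⟨R.normalForm (v i), isGoodList_normalForm _⟩
  have hd : d.mapDomain nf = 0 := by
    have hnf : goodMonomial R A e ∘ nf =
        (canMap R A e F).toLinearMap ∘ fun i => R.word A e F (v i) :=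
      funext fun i => (canMap_word_eq_goodMonomial hmul (v i)).symm
    refine linearIndependent_iff.1 hli _ ?_
    rw [Finsupp.linearCombination_mapDomain, hnf, ← Finsupp.apply_linearCombination]
    exact h0
  rw [Finsupp.apply_linearCombination]
  exact Finsupp.linearCombination_eq_zero_of_factorsThrough
    (fun _ _ h => hΦ (congrArg Subtype.val h)) hd

theorem map_eq_zero_of_mem_quadIdeal {B : Type*} [Ring B] [Algebra F B]
    (Φ : TensorAlgebra F (genOne R A e F) →ₐ[F] B)
    (hΦ : R.CoverRelations fun x => Φ (TensorAlgebra.ι F (R.letter A e F x)))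
    {z : TensorAlgebra F (genOne R A e F)} (hz : z ∈ R.quadIdeal A e F) : Φ z = 0 := by
  have : R.quadIdeal A e F ≤ TwoSidedIdeal.ker Φ := by
    refine TwoSidedIdeal.span_le.2 fun y ⟨hy0, hy2⟩ => (TwoSidedIdeal.mem_ker _).2 ?_
    refine map_eq_zero_of_factorsThrough hli hmul (fun p : R.Plus × R.Plus => [p.1, p.2])
      Φ.toLinearMap (fun p q h => ?_) (degTwo_le_span_word_pair hy2) hy0
    simpa [word] using hΦ.mul_eq_of_normalForm_eq h
  exact (TwoSidedIdeal.mem_ker _).1 (this hz)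

theorem mem_quadIdeal_of_canMap_eq_zero (huni : R.Uniform)
    {z : TensorAlgebra F (genOne R A e F)} (hz : canMap R A e F z = 0) : z ∈ R.quadIdeal A e F := by
  set I := R.quadIdeal A e F
  let π := I.ringCon.mkₐ F
  let g : R.Plus → I.ringCon.Quotient := fun x => π (TensorAlgebra.ι F (R.letter A e F x))
  have hπ : ∀ w, π (R.word A e F w) = (w.map g).prod := fun w => by
    simp [word, map_list_prod, g, Function.comp_def]
  have hg : R.CoverRelations g := fun x a b ha hb => by
    have h : π (R.word A e F [x, a]) = π (R.word A e F [x, b]) :=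
      (RingCon.eq _).2 ((I.rel_iff _ _).2 (word_pair_sub_mem_quadIdeal hmul ha hb))
    simpa [hπ] using h
  have hnf : ∀ w, π (R.word A e F w) = idxProd (R.chainProd g) (R.normalForm w) := fun w => by
    rw [hπ, idxProd_normalForm (mergeRule_chainProd huni hg)]
    exact congrArg List.prod (List.map_congr_left fun x _ => (chainProd_one R g x.2).symm)
  have : π z = 0 := map_eq_zero_of_factorsThrough hli hmul id π.toLinearMap
    (fun v w h => by
      change π (R.word A e F v) = π (R.word A e F w)
      rw [hnf, hnf]
      exact congrArg _ h) (by simp [span_range_word]) hz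
  exact (I.mem_iff z).2 ((RingCon.eq _).1 this)

end Kernel

section Separation

variable {R} {A : Type} [Ring A] {e : Γ → ℕ → A} {F : Type} [Field F] [Algebra F A]

lemma coverRelations_transferMatrix {x₀ : Γ} {C : Γ → Prop}
    (hC : ∀ ⦃y u v : Γ⦄, y ⋖ x₀ → u ⋖ y → v ⋖ y → C u → C v) :
    R.CoverRelations fun y : R.Plus => transferMatrix F x₀ C y := by
  classical
  intro y u v hu hv
  simp only [transferMatrix_mul]
  exact congrArg₂ (· + ·)
    (if_congr (and_congr_right fun h : (y : Γ) = x₀ => by simp only [← h, hu, hv]) rfl rfl)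
    (if_congr (and_congr_right fun h => ⟨hC h hu hv, hC h hv hu⟩) rfl rfl)

theorem eqvGen_coverAdj_of_quadratic (hli : LinearIndependent F (goodMonomial R A e))
    (hmul : R.MergeRule e) (hquad : ∀ z, canMap R A e F z = 0 → z ∈ R.quadIdeal A e F)
    {x a b : Γ} (ha : a ⋖ x) (hb : b ⋖ x) : Relation.EqvGen (CoverAdj x) a b := by
  classical
  by_cases hx2 : R.rk x ≤ 2
  · exact R.eqvGen_coverAdj_of_rk_le_two ha hb hx2
  by_contra hab
  have := R.rk_covBy ha
  have := R.rk_covBy hb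
  have ha' : a ≠ R.star := fun h => by simp_all [R.rk_star]
  have hb' : b ≠ R.star := fun h => by simp_all [R.rk_star]
  have hca := R.lowerCover_covBy ha'
  have hcb := R.lowerCover_covBy hb'
  have := R.rk_covBy hca
  have := R.rk_covBy hcb
  let X : R.Plus := ⟨x, R.ne_star_of_covBy ha⟩
  let c : R.Plus := ⟨lowerCover a, fun h => by have := R.rk_eq_zero_iff.2 h; omega⟩
  let c' : R.Plus := ⟨lowerCover b, fun h => by have := R.rk_eq_zero_iff.2 h; omega⟩
  have hker : R.word A e F [X, ⟨a, ha'⟩, c] - R.word A e F [X, ⟨b, hb'⟩, c'] ∈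
      R.quadIdeal A e F := hquad _ <| by
    rw [map_sub, canMap_word_triple hmul ha hca, canMap_word_triple hmul hb hcb, sub_self]
  let C : Γ → Prop := fun u => ∃ p, p ⋖ x ∧ u ⋖ p ∧ Relation.EqvGen (CoverAdj x) p a
  have hC : ∀ ⦃y u v : Γ⦄, y ⋖ x → u ⋖ y → v ⋖ y → C u → C v := by
    rintro y u v hy hu hv ⟨p, hp, hup, hpa⟩
    exact ⟨y, hy, hv, .trans _ _ _ (.rel _ _ ⟨hy, hp, u, hu, hup⟩) hpa⟩
  have hCc : C c := ⟨a, ha, hca, .refl _⟩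
  have hCc' : ¬C c' := fun ⟨p, hp, hcp, hpa⟩ =>
    hab (.symm _ _ (.trans _ _ _ (.rel _ _ ⟨hb, hp, c', hcb, hcp⟩) hpa))
  let Φ := liftLetters hli fun y : R.Plus => transferMatrix F x C y
  have h03 := congrArg (· 0 3) (map_eq_zero_of_mem_quadIdeal hli hmul Φ
    (by simpa only [Φ, liftLetters_ι_letter] using R.coverRelations_transferMatrix (F := F) hC)
    hker)
  simp [Φ, liftLetters_word, ← mul_assoc, transferMatrix_mul_mul_apply, X, ha, hb, hCc, hCc']
    at h03

end Separation

end RankedPoset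

theorem quadratic_iff_uniform_general
    {Γ : Type} [PartialOrder Γ] (R : RankedPoset Γ)
    (F : Type) [Field F] (A : Type) [Ring A] [Algebra F A]
    (e : Γ → ℕ → A)
    -- (i) the good monomials form an `F`-basis of `A`
    (hli : LinearIndependent F (goodMonomial R A e))
    (hspan : Submodule.span F (Set.range (goodMonomial R A e)) = ⊤)
    -- (ii) `e(x,j)·e(y,k) = e(x,j+k)` whenever `(x,j) ⊵ (y,k)`
    (hmul : ∀ x y : Γ, ∀ j k : ℕ, y ≠ R.star → y < x → j = R.rk x - R.rk y →
      1 ≤ k → k ≤ R.rk y → e x j * e y k = e x (j + k)) :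
    Function.Surjective (canMap R A e F) ∧
      ((∀ z : TensorAlgebra F ↥(genOne R A e F),
          canMap R A e F z = 0 ↔
            z ∈ TwoSidedIdeal.span
              {y | canMap R A e F y = 0 ∧ y ∈ degTwo R A e F}) ↔ R.Uniform) := by
  refine ⟨RankedPoset.canMap_surjective hmul hspan, fun hquad => ?_, fun huni z =>
    ⟨RankedPoset.mem_quadIdeal_of_canMap_eq_zero hli hmul huni,
      RankedPoset.canMap_eq_zero_of_mem_quadIdeal⟩⟩
  exact R.uniform_iff.2 fun x a b ha hb =>
    RankedPoset.eqvGen_coverAdj_of_quadratic hli hmul (fun z => (hquad z).1) ha hb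

/-- Let `A` be a good-monomial algebra for `Γ` over `F`.  Then the canonical map
`T(A₁) → A` is surjective, and its kernel is generated as a two-sided ideal by its
homogeneous component of degree 2 (i.e. `A` is a quadratic algebra) if and only if
`Γ` is uniform. -/
theorem quadratic_iff_uniform
    {Γ : Type} [PartialOrder Γ] [Fintype Γ] (R : RankedPoset Γ)
    (F : Type) [Field F] (A : Type) [Ring A] [Algebra F A]
    (e : Γ → ℕ → A)
    -- (i) the good monomials form an `F`-basis of `A`
    (hli : LinearIndependent F (goodMonomial R A e))
    (hspan : Submodule.span F (Set.range (goodMonomial R A e)) = ⊤)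
    -- (ii) `e(x,j)·e(y,k) = e(x,j+k)` whenever `(x,j) ⊵ (y,k)`
    (hmul : ∀ x y : Γ, ∀ j k : ℕ, y ≠ R.star → y < x → j = R.rk x - R.rk y →
      1 ≤ k → k ≤ R.rk y → e x j * e y k = e x (j + k)) :
    Function.Surjective (canMap R A e F) ∧
      ((∀ z : TensorAlgebra F ↥(genOne R A e F),
          canMap R A e F z = 0 ↔
            z ∈ TwoSidedIdeal.span
              {y | canMap R A e F y = 0 ∧ y ∈ degTwo R A e F}) ↔ R.Uniform) :=
  quadratic_iff_uniform_general R F A e hli hspan hmul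
end

section
/- Let b ∈ Γ and let n be an integer with 3 ≤ n ≤ rk(b). If the comparability graph of Γ_{b,3} (vertex set Γ_{b,3}, with an edge between distinct a, a′ whenever a < a′ or a′ < a) is connected, then the comparability graph of Γ_{b,n} is connected. Equivalently, if Γ_{b,n} is disconnected for some n > 3 then Γ_{b,3} is disconnected. -/
/-- Membership in `Γ_{b,q} = {a | * < a < b and d(b,a) ≤ q - 1}`. -/
def memGbq {Γ : Type} [PartialOrder Γ] (R : RankedPoset Γ) (b : Γ) (q : ℕ) (a : Γ) : Prop :=
  R.star < a ∧ a < b ∧ R.rk b - R.rk a ≤ q - 1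

/-- The comparability graph of a subset `S` of the poset `Γ`: vertices are the elements
of `S`, with an edge between distinct `a, a'` whenever `a < a'` or `a' < a`. -/
def compGraph {Γ : Type} [PartialOrder Γ] (S : Γ → Prop) : SimpleGraph {a : Γ // S a} where
  Adj u v := u ≠ v ∧ (u.1 < v.1 ∨ v.1 < u.1)
  symm := ⟨fun u v h => ⟨h.1.symm, h.2.symm⟩⟩
  loopless := ⟨fun u h => h.1 rfl⟩

namespace SimpleGraph

variable {V W : Type*} {G : SimpleGraph V} {H : SimpleGraph W}

theorem Connected.of_hom_of_forall_exists_reachable (hG : G.Connected) (f : G →g H)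
    (hf : ∀ w, ∃ v, H.Reachable (f v) w) : H.Connected := by
  obtain ⟨v₀⟩ := hG.nonempty
  refine H.connected_iff_exists_forall_reachable.2 ⟨f v₀, fun w => ?_⟩
  obtain ⟨v, hv⟩ := hf w
  exact ((hG v₀ v).map f).trans hv

end SimpleGraph

section CompGraph

variable {Γ : Type} [PartialOrder Γ]

def compGraphInclusion {S T : Γ → Prop} (hST : ∀ a, S a → T a) :
    compGraph S →g compGraph T where
  toFun a := ⟨a.1, hST a.1 a.2⟩
  map_rel' h := ⟨fun e => h.1 (Subtype.ext (Subtype.mk_eq_mk.mp e)), h.2⟩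

lemma compGraph_reachable_of_le {S : Γ → Prop} {u v : {a // S a}} (h : u.1 ≤ v.1) :
    (compGraph S).Reachable u v := by
  rcases h.eq_or_lt with e | hlt
  · rw [Subtype.ext e]
  · exact SimpleGraph.Adj.reachable ⟨fun e => hlt.ne (congrArg Subtype.val e), Or.inl hlt⟩

lemma compGraph_connected_of_forall_exists_comparable {S T : Γ → Prop} (hST : ∀ a, S a → T a)
    (hcov : ∀ a, T a → ∃ a', S a' ∧ (a ≤ a' ∨ a' ≤ a)) (hS : (compGraph S).Connected) :
    (compGraph T).Connected := by
  refine hS.of_hom_of_forall_exists_reachable (compGraphInclusion hST) fun ⟨a, ha⟩ => ?_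
  obtain ⟨a', ha', hcomp⟩ := hcov a ha
  refine ⟨⟨a', ha'⟩, ?_⟩
  rcases hcomp with hle | hle
  · exact (compGraph_reachable_of_le hle).symm
  · exact compGraph_reachable_of_le hle

end CompGraph

namespace RankedPoset

variable {Γ : Type} [PartialOrder Γ] (R : RankedPoset Γ)

lemma exists_between_of_rk_add_two_le {a b : Γ} (hab : a < b) (h : R.rk a + 2 ≤ R.rk b) :
    ∃ c, a < c ∧ c < b := by
  by_contra! hno
  have := R.rk_covBy ⟨hab, fun c hac hcb => hno c hac hcb⟩
  omega

variable {R} {b : Γ}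

lemma memGbq_mono {q q' : ℕ} (hq : q ≤ q') {a : Γ} (ha : memGbq R b q a) : memGbq R b q' a :=
  ⟨ha.1, ha.2.1, ha.2.2.trans (by omega)⟩

lemma exists_memGbq_le_of_memGbq_succ {q : ℕ} (hq : 2 ≤ q) {a : Γ} (ha : memGbq R b (q + 1) a) :
    ∃ c, memGbq R b q c ∧ a ≤ c := by
  obtain ⟨hstar, hab, hd⟩ := ha
  by_cases hle : R.rk b - R.rk a ≤ q - 1
  · exact ⟨a, ⟨hstar, hab, hle⟩, le_rfl⟩
  have hrk : R.rk a < R.rk b := R.rk_strictMono hab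
  obtain ⟨c, hac, hcb⟩ := R.exists_between_of_rk_add_two_le hab (by omega)
  have hrk_ac : R.rk a < R.rk c := R.rk_strictMono hac
  exact ⟨c, ⟨hstar.trans hac, hcb, by omega⟩, hac.le⟩

lemma compGraph_memGbq_succ_connected {q : ℕ} (hq : 2 ≤ q)
    (h : (compGraph (memGbq R b q)).Connected) :
    (compGraph (memGbq R b (q + 1))).Connected :=
  compGraph_connected_of_forall_exists_comparable (fun _ => memGbq_mono q.le_succ)
    (fun _ ha => (exists_memGbq_le_of_memGbq_succ hq ha).imp fun _ hc => ⟨hc.1, Or.inl hc.2⟩) h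

end RankedPoset

theorem compGraph_connected_of_compGraph_three_connected_general
    {Γ : Type} [PartialOrder Γ] (R : RankedPoset Γ)
    (b : Γ) (n : ℕ) (h3 : 3 ≤ n)
    (hconn : (compGraph (memGbq R b 3)).Connected) :
    (compGraph (memGbq R b n)).Connected := by
  induction n, h3 using Nat.le_induction with
  | base => exact hconn
  | succ q hq ih => exact RankedPoset.compGraph_memGbq_succ_connected (by omega) ih

/-- For `b ∈ Γ` and `3 ≤ n ≤ rk b`: if the comparability graph of `Γ_{b,3}` is
connected, then the comparability graph of `Γ_{b,n}` is connected.  (Equivalently, if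
`Γ_{b,n}` is disconnected for some `n > 3` then `Γ_{b,3}` is disconnected.) -/
theorem compGraph_connected_of_compGraph_three_connected
    {Γ : Type} [PartialOrder Γ] [Fintype Γ] (R : RankedPoset Γ)
    (b : Γ) (n : ℕ) (h3 : 3 ≤ n) (hn : n ≤ R.rk b)
    (hconn : (compGraph (memGbq R b 3)).Connected) :
    (compGraph (memGbq R b n)).Connected :=
  compGraph_connected_of_compGraph_three_connected_general R b n h3 hconn
end
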